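/- arXiv:1405.5154 — 2 statements merged into one kernel-verified Lean document; each statement's English description precedes it below -/
import Mathlib

section
/- For a real variety X, χ_R(Sym^2 X) = (χ_R(X)^2 + χ_C(X))/2, as follows from the real realization of the Kapranov zeta function χ_R(Z_Kap(X,t)) = (1/(1-t^2))^{(χ_C - χ_R)/2} · (1/(1-t))^{χ_R}. -/
open PowerSeries

/-! Only the coefficients of `1, t, t²` matter. For a power series `w = 1 + a t + b t² + ⋯` and
`n ∈ ℤ`, the series `w ^ n` is `1 + n a t + (n b + n(n-1)/2 · a²) t² + ⋯`; for `1 - t²` this gives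
`m t²` at exponent `-m`, for `1 - t` it gives `r t + r(r+1)/2 · t²` at exponent `-r`, and
`m + r(r+1)/2 = (r² + c)/2` since `2m = c - r`. -/

namespace PowerSeries

variable {R : Type*} [CommRing R]

theorem coeff_two_mul (φ ψ : R⟦X⟧) :
    coeff 2 (φ * ψ) =
      coeff 2 φ * constantCoeff ψ + coeff 1 φ * coeff 1 ψ + constantCoeff φ * coeff 2 ψ := by
  rw [coeff_mul, Finset.Nat.sum_antidiagonal_eq_sum_range_succ_mk]
  simp only [Finset.sum_range_succ, Finset.sum_range_zero, Nat.sub_self,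
    coeff_zero_eq_constantCoeff_apply]
  ring

-- Doubled so that `n(n-1)/2` needs no division in `R`.
theorem coeff_zpow_of_constantCoeff_eq_one (w : R⟦X⟧ˣ) (hw : constantCoeff (w : R⟦X⟧) = 1)
    (n : ℤ) :
    constantCoeff ((w ^ n : R⟦X⟧ˣ) : R⟦X⟧) = 1 ∧
      coeff 1 ((w ^ n : R⟦X⟧ˣ) : R⟦X⟧) = n * coeff 1 (w : R⟦X⟧) ∧
      2 * coeff 2 ((w ^ n : R⟦X⟧ˣ) : R⟦X⟧) =
        2 * n * coeff 2 (w : R⟦X⟧) + n * (n - 1) * coeff 1 (w : R⟦X⟧) ^ 2 := by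
  induction n using Int.induction_on with
  | zero => simp
  | succ k ih =>
    obtain ⟨h0, h1, h2⟩ := ih
    rw [zpow_add_one, Units.val_mul, map_mul, coeff_one_mul, coeff_two_mul, h0, hw, h1]
    refine ⟨one_mul 1, by push_cast; ring, ?_⟩
    push_cast at h2 ⊢
    linear_combination h2
  | pred k ih =>
    obtain ⟨h0, h1, h2⟩ := ih
    rw [← sub_add_cancel (-(k : ℤ)) 1, zpow_add_one, Units.val_mul] at h0 h1 h2
    rw [map_mul, hw, mul_one] at h0
    rw [coeff_one_mul, hw, h0] at h1
    rw [coeff_two_mul, hw, h0] at h2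
    refine ⟨h0, by push_cast at h1 ⊢; linear_combination h1, ?_⟩
    push_cast at h1 h2 ⊢
    linear_combination h2 - 2 * (coeff 1 (w : R⟦X⟧)) * h1

end PowerSeries

/-- Real realization of the Kapranov zeta function: for integers r, c with
c ≡ r (mod 2), the coefficient of t² in (1-t²)^{-(c-r)/2}(1-t)^{-r} equals
(r² + c)/2. -/
theorem coeff_two_real_zeta (u v : (PowerSeries ℤ)ˣ)
    (hu : (u : PowerSeries ℤ) = 1 - PowerSeries.X ^ 2)
    (hv : (v : PowerSeries ℤ) = 1 - PowerSeries.X)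
    (r c m : ℤ) (hm : 2 * m = c - r) :
    2 * PowerSeries.coeff 2
        ((u ^ (-m) * v ^ (-r) : (PowerSeries ℤ)ˣ) : PowerSeries ℤ)
      = r ^ 2 + c := by
  have hu1 : coeff 1 (u : ℤ⟦X⟧) = 0 := by simp [hu, coeff_X_pow]
  have hu2 : coeff 2 (u : ℤ⟦X⟧) = -1 := by simp [hu, coeff_X_pow]
  have hv1 : coeff 1 (v : ℤ⟦X⟧) = -1 := by simp [hv]
  have hv2 : coeff 2 (v : ℤ⟦X⟧) = 0 := by simp [hv, coeff_X]
  obtain ⟨u0, u1, u2⟩ := coeff_zpow_of_constantCoeff_eq_one u (by simp [hu]) (-m)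
  obtain ⟨v0, -, v2⟩ := coeff_zpow_of_constantCoeff_eq_one v (by simp [hv]) (-r)
  rw [Units.val_mul, coeff_two_mul, u0, v0, u1, hu1]
  rw [hu1, hu2, Int.cast_id] at u2
  rw [hv1, hv2, Int.cast_id] at v2
  linear_combination u2 + v2 + hm
end

section
/- For a cone Y over a (d-1)-dimensional cubic Ȳ, if [Y] = 1 + L[Ȳ], [F(Y)] = [Ȳ] + L^2[F(Ȳ)], [Sing Y] = 1 + L[Sing Ȳ], and the Y-F(Y) relation Sym^2[Ȳ] = (1+L^{d-1})[Ȳ] + L^2[F(Ȳ)] - L^{d-1}[Sing Ȳ] holds for Ȳ, then the relation Sym^2[Y] = (1+L^d)[Y] + L^2[F(Y)] - L^d[Sing Y] holds for Y. -/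
/-- The Y–F(Y) relation for a cone: in a commutative ring with a Sym²
operation, if the relation holds for the base cubic Ȳ of dimension d-1, it
holds for the cone Y of dimension d. -/
theorem cone_YFY_relation (R : Type*) [CommRing R] (sym2 : R → R) (L : R)
    (hadd : ∀ a b : R, sym2 (a + b) = sym2 a + a * b + sym2 b)
    (hL : ∀ a : R, sym2 (L * a) = L ^ 2 * sym2 a)
    (hone : sym2 1 = 1)
    (d : ℕ) (hd : 1 ≤ d)
    (y f s ybar fbar sbar : R)
    (hy : y = 1 + L * ybar)
    (hf : f = ybar + L ^ 2 * fbar)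
    (hs : s = 1 + L * sbar)
    (hbar : sym2 ybar = (1 + L ^ (d - 1)) * ybar + L ^ 2 * fbar
        - L ^ (d - 1) * sbar) :
    sym2 y = (1 + L ^ d) * y + L ^ 2 * f - L ^ d * s := by
  obtain ⟨e, rfl⟩ : ∃ e, d = e + 1 := ⟨d - 1, (Nat.succ_pred_eq_of_pos hd).symm⟩
  subst hy hf hs
  rw [hadd, hone, hL, hbar]
  simp only [Nat.add_sub_cancel]
  ring
end
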